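/- The function β ↦ MK*_{λ,≤N}(β), defined piecewise as (N/λ)⟨q_λ(β),1⟩ when ⟨q_λ(β),1⟩ ≤ 1 and as (N/λ)log⟨q_λ(β),1⟩ + N/λ when ⟨q_λ(β),1⟩ ≥ 1 with q_λ(β) = exp(λ(Lβ−c)−1), is continuously differentiable on ℝ^{2M}, with gradient N·Lᵀq_λ(β) in the first region and N·Lᵀq_λ(β)/⟨q_λ(β),1⟩ in the second. -/

import Mathlib

/-!
Put `φ t = t` for `t ≤ 1` and `φ t = log t + 1` for `t > 1`, so that
`MK*_{λ,≤N}(β) = (N/λ) φ(⟨q_λ(β),1⟩)`. The two branches of `φ` glue to a `C¹` function: `φ` is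
the primitive of the continuous function `t ↦ 1 / max t 1` taking the value `1` at `1`.
The mass `⟨q_λ(β),1⟩` is smooth in `β` with gradient `λ Lᵀ q_λ(β)`, by `⟪Lᵀ q, v⟫ = ⟪q, L v⟫`.
The chain rule gives both claims, the factor `λ` cancelling against `N/λ`.
-/

open scoped BigOperators Classical

/-- The dual Sinkhorn cost `MK*_{λ,≤N}` as a function of
`β ∈ ℝ^{2M} ≃ EuclideanSpace ℝ (Fin M ⊕ Fin M)`. -/
noncomputable def MKstarLeN (M : ℕ) (lam Nr : ℝ) (C : Matrix (Fin M) (Fin M) ℝ)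
    (β : EuclideanSpace ℝ (Fin M ⊕ Fin M)) : ℝ :=
  letI S : ℝ := ∑ i, ∑ j,
    Real.exp (lam * (β (Sum.inl i) + β (Sum.inr j) - C i j) - 1)
  if S ≤ 1 then (Nr / lam) * S else (Nr / lam) * Real.log S + Nr / lam

/-- Its gradient `N · Lᵀ q_λ(β)` in the region `⟨q_λ(β),1⟩ ≤ 1`, and
`N · Lᵀ q_λ(β) / ⟨q_λ(β),1⟩` otherwise. -/
noncomputable def MKstarGrad (M : ℕ) (lam Nr : ℝ) (C : Matrix (Fin M) (Fin M) ℝ)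
    (β : EuclideanSpace ℝ (Fin M ⊕ Fin M)) : EuclideanSpace ℝ (Fin M ⊕ Fin M) :=
  letI q : Fin M → Fin M → ℝ := fun i j =>
    Real.exp (lam * (β (Sum.inl i) + β (Sum.inr j) - C i j) - 1)
  letI S : ℝ := ∑ i, ∑ j, q i j
  WithLp.toLp 2 fun idx =>
    match idx with
    | Sum.inl i => if S ≤ 1 then Nr * ∑ j, q i j else Nr * (∑ j, q i j) / S
    | Sum.inr j => if S ≤ 1 then Nr * ∑ i, q i j else Nr * (∑ i, q i j) / S

noncomputable def linLog (t : ℝ) : ℝ := if t ≤ 1 then t else Real.log t + 1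

lemma linLog_eq_one_add_integral (t : ℝ) : linLog t = 1 + ∫ s in (1 : ℝ)..t, (max s 1)⁻¹ := by
  rcases le_or_gt t 1 with ht | ht
  · have : ∫ s in (1 : ℝ)..t, (max s 1)⁻¹ = ∫ _ in (1 : ℝ)..t, (1 : ℝ) :=
      intervalIntegral.integral_congr fun s hs => by
        rw [Set.uIcc_of_ge ht] at hs
        simp [max_eq_right hs.2]
    simp [linLog, ht, this]
  · have : ∫ s in (1 : ℝ)..t, (max s 1)⁻¹ = ∫ s in (1 : ℝ)..t, s⁻¹ :=
      intervalIntegral.integral_congr fun s hs => by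
        rw [Set.uIcc_of_le ht.le] at hs
        simp [max_eq_left hs.1]
    rw [this, integral_inv_of_pos one_pos (one_pos.trans ht), div_one, linLog, if_neg ht.not_ge]
    ring

lemma continuous_inv_max_one : Continuous fun t : ℝ => (max t 1)⁻¹ :=
  (continuous_id.max continuous_const).inv₀ fun t => (one_pos.trans_le (le_max_right t 1)).ne'

lemma hasDerivAt_linLog (t : ℝ) : HasDerivAt linLog (max t 1)⁻¹ t := by
  rw [show linLog = fun u => 1 + ∫ s in (1 : ℝ)..u, (max s 1)⁻¹ from
    funext linLog_eq_one_add_integral]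
  exact (continuous_inv_max_one.integral_hasStrictDerivAt 1 t).hasDerivAt.const_add 1

lemma contDiff_linLog : ContDiff ℝ 1 linLog := by
  rw [contDiff_one_iff_deriv]
  refine ⟨fun t => (hasDerivAt_linLog t).differentiableAt, ?_⟩
  rw [show deriv linLog = fun t => (max t 1)⁻¹ from funext fun t => (hasDerivAt_linLog t).deriv]
  exact continuous_inv_max_one

section Marginals

variable {ι κ : Type*} [Fintype ι] [Fintype κ]

/-- The map `Lᵀ` of the paper: row sums on the first copy of the indices, column sums on the
second. -/
def marginals (q : ι → κ → ℝ) : ι ⊕ κ → ℝ :=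
  Sum.elim (fun i => ∑ j, q i j) (fun j => ∑ i, q i j)

lemma sum_marginals_mul (q : ι → κ → ℝ) (v : ι ⊕ κ → ℝ) :
    ∑ x, marginals q x * v x = ∑ i, ∑ j, q i j * (v (Sum.inl i) + v (Sum.inr j)) := by
  simp only [Fintype.sum_sum_type, marginals, Sum.elim_inl, Sum.elim_inr, Finset.sum_mul,
    mul_add, Finset.sum_add_distrib]
  rw [Finset.sum_comm (f := fun j i => q i j * v (Sum.inr j))]

end Marginals

section GibbsKernel

variable {ι κ : Type*} [Fintype ι] [Fintype κ] (lam : ℝ) (C : Matrix ι κ ℝ)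

/-- The paper's `q_λ(β)`, with cost `c = C`. -/
noncomputable def gibbsKernel (β : EuclideanSpace ℝ (ι ⊕ κ)) (i : ι) (j : κ) : ℝ :=
  Real.exp (lam * (β (Sum.inl i) + β (Sum.inr j) - C i j) - 1)

noncomputable def gibbsMass (β : EuclideanSpace ℝ (ι ⊕ κ)) : ℝ :=
  ∑ i, ∑ j, gibbsKernel lam C β i j

lemma contDiff_gibbsMass : ContDiff ℝ ⊤ (gibbsMass lam C) := by
  unfold gibbsMass gibbsKernel
  fun_prop

lemma hasGradientAt_gibbsMass (β : EuclideanSpace ℝ (ι ⊕ κ)) :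
    HasGradientAt (gibbsMass lam C) (lam • WithLp.toLp 2 (marginals (gibbsKernel lam C β))) β := by
  have hq : ∀ i j, HasFDerivAt (fun γ => gibbsKernel lam C γ i j)
      (gibbsKernel lam C β i j • lam •
        (PiLp.proj 2 (fun _ => ℝ) (Sum.inl i) + PiLp.proj 2 (fun _ => ℝ) (Sum.inr j))) β :=
    fun i j => ((((PiLp.hasFDerivAt_apply 2 β (Sum.inl i)).add
      (PiLp.hasFDerivAt_apply 2 β (Sum.inr j))).sub_const (C i j)).const_mul lam).sub_const 1 |>.exp
  rw [hasGradientAt_iff_hasFDerivAt]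
  refine (HasFDerivAt.fun_sum fun i _ => HasFDerivAt.fun_sum fun j _ => hq i j).congr_fderiv ?_
  ext v
  simp only [InnerProductSpace.toDual_apply_apply, PiLp.inner_apply, RCLike.inner_apply,
    conj_trivial, FunLike.coe_sum, Finset.sum_apply, FunLike.coe_smul, Pi.smul_apply, add_apply,
    PiLp.proj_apply, PiLp.smul_apply, smul_eq_mul, mul_comm (v _), mul_assoc, ← Finset.mul_sum,
    sum_marginals_mul, mul_left_comm _ lam]

end GibbsKernel

lemma HasDerivAt.comp_hasGradientAt {F : Type*} [NormedAddCommGroup F] [InnerProductSpace ℝ F]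
    [CompleteSpace F] {g : ℝ → ℝ} {g' : ℝ} {f : F → ℝ} {f' x : F}
    (hg : HasDerivAt g g' (f x)) (hf : HasGradientAt f f' x) :
    HasGradientAt (g ∘ f) (g' • f') x := by
  rw [hasGradientAt_iff_hasFDerivAt] at hf ⊢
  refine (hg.comp_hasFDerivAt x hf).congr_fderiv ?_
  ext v
  simp

lemma MKstarLeN_eq_comp (M : ℕ) (lam Nr : ℝ) (C : Matrix (Fin M) (Fin M) ℝ) :
    MKstarLeN M lam Nr C = (fun t => Nr / lam * linLog t) ∘ gibbsMass lam C := by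
  funext β
  change (if gibbsMass lam C β ≤ 1 then Nr / lam * gibbsMass lam C β
    else Nr / lam * Real.log (gibbsMass lam C β) + Nr / lam) = Nr / lam * linLog (gibbsMass lam C β)
  unfold linLog
  split_ifs <;> ring

lemma MKstarGrad_eq (M : ℕ) (lam Nr : ℝ) (C : Matrix (Fin M) (Fin M) ℝ)
    (β : EuclideanSpace ℝ (Fin M ⊕ Fin M)) :
    MKstarGrad M lam Nr C β =
      (Nr / max (gibbsMass lam C β) 1) • WithLp.toLp 2 (marginals (gibbsKernel lam C β)) := by
  ext (i | j) <;>
  · simp only [MKstarGrad, PiLp.smul_apply, smul_eq_mul, marginals, Sum.elim_inl, Sum.elim_inr,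
      gibbsMass, gibbsKernel]
    split_ifs with h
    · simp [max_eq_right h]
    · rw [max_eq_left (not_le.1 h).le]
      ring

theorem stmt_11_general (M : ℕ) (lam Nr : ℝ) (hlam : 0 < lam)
    (C : Matrix (Fin M) (Fin M) ℝ) :
    ContDiff ℝ 1 (MKstarLeN M lam Nr C) ∧
    ∀ β : EuclideanSpace ℝ (Fin M ⊕ Fin M),
      HasGradientAt (MKstarLeN M lam Nr C) (MKstarGrad M lam Nr C β) β := by
  rw [MKstarLeN_eq_comp]
  refine ⟨(contDiff_const.mul contDiff_linLog).comp ((contDiff_gibbsMass lam C).of_le le_top),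
    fun β => ?_⟩
  convert ((hasDerivAt_linLog _).const_mul (Nr / lam)).comp_hasGradientAt
    (hasGradientAt_gibbsMass lam C β) using 1
  rw [MKstarGrad_eq, smul_smul]
  field_simp [hlam.ne']

/-- `MK*_{λ,≤N}` is continuously differentiable on `ℝ^{2M}`
with the gradient given above. -/
theorem stmt_11 (M : ℕ) (lam Nr : ℝ) (hlam : 0 < lam) (hN : 0 < Nr)
    (C : Matrix (Fin M) (Fin M) ℝ) :
    ContDiff ℝ 1 (MKstarLeN M lam Nr C) ∧
    ∀ β : EuclideanSpace ℝ (Fin M ⊕ Fin M),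
      HasGradientAt (MKstarLeN M lam Nr C) (MKstarGrad M lam Nr C β) β :=
  stmt_11_general M lam Nr hlam C
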